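/- arXiv:1904.03467 — 7 statements merged into one kernel-verified Lean document; each statement's English description precedes it below -/
import Mathlib

section
/- Any two locally-dense subgraphs U and W of a graph G are comparable: either U ⊆ W or W ⊆ U. -/
open Finset

variable {V : Type*}

/-- Edges of `G` with both endpoints in `X`. -/
def innerEdges [Fintype V] [DecidableEq V] (G : SimpleGraph V) [DecidableRel G.Adj]
    (X : Finset V) : Finset (Sym2 V) :=
  G.edgeFinset.filter (fun e => ∀ v ∈ e, v ∈ X)

/-- Marginal edges `Ẽ(X,Y) = E(X) ∪ E(X,Y)` (for disjoint `X`, `Y`):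
edges with both endpoints in `X ∪ Y`, at least one in `X`. -/
def margEdges [Fintype V] [DecidableEq V] (G : SimpleGraph V) [DecidableRel G.Adj]
    (X Y : Finset V) : Finset (Sym2 V) :=
  G.edgeFinset.filter (fun e => (∀ v ∈ e, v ∈ X ∪ Y) ∧ ∃ v ∈ e, v ∈ X)

/-- Outer density `d(X,Y) = |Ẽ(X \ Y, Y)| / |X \ Y|`. -/
def outDensity [Fintype V] [DecidableEq V] (G : SimpleGraph V) [DecidableRel G.Adj]
    (X Y : Finset V) : ℚ :=
  ((margEdges G (X \ Y) Y).card : ℚ) / ((X \ Y).card : ℚ)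

/-- `W` is locally dense: there is no nonempty `X ⊆ W` and nonempty `Y` with `Y ∩ W = ∅`
such that `d(X, W \ X) ≤ d(Y, W)`. -/
def LocallyDense [Fintype V] [DecidableEq V] (G : SimpleGraph V) [DecidableRel G.Adj]
    (W : Finset V) : Prop :=
  ¬ ∃ X Y : Finset V, X.Nonempty ∧ Y.Nonempty ∧ X ⊆ W ∧ Y ∩ W = ∅ ∧
      outDensity G X (W \ X) ≤ outDensity G Y W

/-- Number of neighbors of `x` in `U`. -/
def degIn [DecidableEq V] (G : SimpleGraph V) [DecidableRel G.Adj] (x : V) (U : Finset V) : ℕ :=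
  (U.filter (G.Adj x)).card

/-!
If neither of `U`, `W` contains the other, put `A = U \ W` and `B = W \ U`; both are nonempty and
`U \ A = W \ B = U ∩ W`. Local density of `U` and of `W` gives
`d(B, U) < d(A, U ∩ W)` and `d(A, W) < d(B, U ∩ W)`, while enlarging the outer set can only add
marginal edges, so `d(A, U ∩ W) ≤ d(A, W)` and `d(B, U ∩ W) ≤ d(B, U)`. The four inequalities
form a strict cycle.
-/

section

variable [Fintype V] [DecidableEq V] (G : SimpleGraph V) [DecidableRel G.Adj]

lemma margEdges_mono_right {X Y Y' : Finset V} (h : Y ⊆ Y') :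
    margEdges G X Y ⊆ margEdges G X Y' :=
  Finset.monotone_filter_right _ fun _ _ ⟨hY, hX⟩ =>
    ⟨fun v hv => Finset.union_subset_union_right h (hY v hv), hX⟩

lemma outDensity_mono_right {X Y Y' : Finset V} (h : Y ⊆ Y') (hX : Disjoint X Y') :
    outDensity G X Y ≤ outDensity G X Y' := by
  have hXY : X \ Y = X := Finset.sdiff_eq_self_of_disjoint (hX.mono_right h)
  unfold outDensity
  rw [hXY, Finset.sdiff_eq_self_of_disjoint hX]
  gcongr
  exact margEdges_mono_right G h

variable {G}

lemma LocallyDense.outDensity_lt {W X Y : Finset V} (hW : LocallyDense G W)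
    (hX : X.Nonempty) (hY : Y.Nonempty) (hXW : X ⊆ W) (hYW : Disjoint Y W) :
    outDensity G Y W < outDensity G X (W \ X) :=
  lt_of_not_ge fun h =>
    hW ⟨X, Y, hX, hY, hXW, Finset.disjoint_iff_inter_eq_empty.1 hYW, h⟩

end

theorem locallyDense_comparable [Fintype V] [DecidableEq V] (G : SimpleGraph V) [DecidableRel G.Adj]
    (U W : Finset V) (hU : LocallyDense G U) (hW : LocallyDense G W) :
    U ⊆ W ∨ W ⊆ U := by
  by_contra! ⟨hUW, hWU⟩
  have hA : (U \ W).Nonempty := Finset.sdiff_nonempty.2 hUW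
  have hB : (W \ U).Nonempty := Finset.sdiff_nonempty.2 hWU
  have hUA : U \ (U \ W) = U ∩ W := Finset.sdiff_sdiff_self_left U W
  have hWB : W \ (W \ U) = U ∩ W := by rw [Finset.sdiff_sdiff_self_left, Finset.inter_comm]
  have hBU := hU.outDensity_lt hA hB Finset.sdiff_subset Finset.sdiff_disjoint
  have hAW := hW.outDensity_lt hB hA Finset.sdiff_subset Finset.sdiff_disjoint
  rw [hUA] at hBU
  rw [hWB] at hAW
  have hA_mono : outDensity G (U \ W) (U ∩ W) ≤ outDensity G (U \ W) W :=
    outDensity_mono_right G Finset.inter_subset_right Finset.sdiff_disjoint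
  have hB_mono : outDensity G (W \ U) (U ∩ W) ≤ outDensity G (W \ U) U :=
    outDensity_mono_right G Finset.inter_subset_left Finset.sdiff_disjoint
  exact (hBU.trans_le hA_mono |>.trans hAW |>.trans_le hB_mono).false
end

section
/- Let X ⊆ Y be vertex sets and Z a vertex set disjoint from Y, with Z and Y\X nonempty. If d(Z, Y) ≥ d(Y, X), then d(Y ∪ Z, X) ≥ d(Y, X). -/
/-! The edges counted by `d(Y ∪ Z, X)` split disjointly into those counted by `d(Y, X)` and those
counted by `d(Z, Y)`, and the vertex counts add as well, so `d(Y ∪ Z, X)` is the mediant of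
`d(Y, X)` and `d(Z, Y)` and hence at least the smaller of the two. -/

open Finset

variable {V : Type*}

section margEdges

variable [Fintype V] [DecidableEq V] (G : SimpleGraph V) [DecidableRel G.Adj] {A X Z : Finset V}

theorem margEdges_union_eq :
    margEdges G (A ∪ Z) X = margEdges G A X ∪ margEdges G Z (A ∪ X) := by
  ext e
  simp only [margEdges, mem_union, mem_filter]
  constructor
  · rintro ⟨he, hall, v, hv, hvA | hvZ⟩
    · by_cases hmeetZ : ∃ w ∈ e, w ∈ Z
      · exact .inr ⟨he, fun w hw => by have := hall w hw; tauto, hmeetZ⟩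
      · push Not at hmeetZ
        exact .inl ⟨he, fun w hw => by have := hall w hw; have := hmeetZ w hw; tauto, v, hv, hvA⟩
    · exact .inr ⟨he, fun w hw => by have := hall w hw; tauto, v, hv, hvZ⟩
  · rintro (⟨he, hall, v, hv, hvA⟩ | ⟨he, hall, v, hv, hvZ⟩)
    · exact ⟨he, fun w hw => by have := hall w hw; tauto, v, hv, .inl hvA⟩
    · exact ⟨he, fun w hw => by have := hall w hw; tauto, v, hv, .inr hvZ⟩

theorem disjoint_margEdges (hZ : Disjoint Z (A ∪ X)) :
    Disjoint (margEdges G A X) (margEdges G Z (A ∪ X)) := by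
  refine Finset.disjoint_left.2 fun e h₁ h₂ => ?_
  obtain ⟨-, hall, -⟩ := mem_filter.1 h₁
  obtain ⟨-, -, v, hv, hvZ⟩ := mem_filter.1 h₂
  exact Finset.disjoint_left.1 hZ hvZ (hall v hv)

theorem card_margEdges_union (hZ : Disjoint Z (A ∪ X)) :
    #(margEdges G (A ∪ Z) X) = #(margEdges G A X) + #(margEdges G Z (A ∪ X)) := by
  rw [margEdges_union_eq, card_union_of_disjoint (disjoint_margEdges G hZ)]

end margEdges

theorem div_le_add_div_add_of_div_le {K : Type*} [Field K] [LinearOrder K] [IsStrictOrderedRing K]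
    {a b c d : K} (hb : 0 < b) (hd : 0 < d) (h : a / b ≤ c / d) :
    a / b ≤ (a + c) / (b + d) := by
  rw [div_le_div_iff₀ hb hd] at h
  rw [div_le_div_iff₀ hb (add_pos hb hd)]
  linarith

theorem density_add_lemma [Fintype V] [DecidableEq V] (G : SimpleGraph V) [DecidableRel G.Adj]
    (X Y Z : Finset V) (hXY : X ⊆ Y) (hZY : Z ∩ Y = ∅)
    (hZ : Z.Nonempty) (hYX : (Y \ X).Nonempty)
    (h : outDensity G Y X ≤ outDensity G Z Y) :
    outDensity G Y X ≤ outDensity G (Y ∪ Z) X := by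
  have hZY' : Disjoint Z Y := disjoint_iff_inter_eq_empty.2 hZY
  have hY : Y \ X ∪ X = Y := sdiff_union_of_subset hXY
  have hYZ : (Y ∪ Z) \ X = Y \ X ∪ Z := by
    rw [union_sdiff_distrib, sdiff_eq_self_of_disjoint (hZY'.mono_right hXY)]
  have hedges := card_margEdges_union G (A := Y \ X) (X := X) (hY ▸ hZY')
  have hvertices := card_union_of_disjoint (hZY'.mono_right (sdiff_subset (t := X))).symm
  unfold outDensity at h ⊢
  rw [sdiff_eq_self_of_disjoint hZY'] at h
  rw [hYZ, hedges, hvertices, hY, Nat.cast_add, Nat.cast_add]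
  exact div_le_add_div_add_of_div_le (by exact_mod_cast hYX.card_pos)
    (by exact_mod_cast hZ.card_pos) h
end

section
/- Let X ⊆ Y be vertex sets and Z ⊆ Y\X a nonempty set with Z ≠ Y\X. If d(Z, Y\Z) < d(Y, X), then d(Y\Z, X) > d(Y, X). -/
open Finset

variable {V : Type*}

/-!
Writing `Y \ X = Z ⊔ W` with `W = (Y \ X) \ Z`, the marginal edges of `Y \ X` over `X` split
into those of `Z` over `Y \ Z = W ∪ X` and those of `W` over `X`. Hence `d(Y, X)` is the mediant
of `d(Z, Y \ Z)` and `d(Y \ Z, X)`, and a mediant lying strictly above one of the two fractions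
lies strictly below the other.
-/

lemma mediant_lt_right_of_left_lt_mediant {K : Type*} [Field K] [LinearOrder K]
    [IsStrictOrderedRing K] {a b c d : K} (hb : 0 < b) (hd : 0 < d)
    (h : a / b < (a + c) / (b + d)) : (a + c) / (b + d) < c / d := by
  have hbd : 0 < b + d := add_pos hb hd
  rw [div_lt_div_iff₀ hb hbd] at h
  rw [div_lt_div_iff₀ hbd hd]
  linarith

section

variable [Fintype V] [DecidableEq V] (G : SimpleGraph V) [DecidableRel G.Adj]

lemma margEdges_union_left (A B C : Finset V) :
    margEdges G (A ∪ B) C = margEdges G A (B ∪ C) ∪ margEdges G B C := by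
  ext e
  induction e using Sym2.ind with
  | _ u v =>
    simp only [margEdges, mem_union, mem_filter, Sym2.mem_iff, forall_eq_or_imp, forall_eq,
      exists_eq_or_imp, exists_eq_left]
    grind

lemma card_margEdges_union_left {A B C : Finset V} (h : Disjoint A (B ∪ C)) :
    #(margEdges G (A ∪ B) C) = #(margEdges G A (B ∪ C)) + #(margEdges G B C) := by
  rw [margEdges_union_left, card_union_of_disjoint (disjoint_left.2 fun e heA heB => ?_)]
  obtain ⟨v, hv, hvA⟩ := (mem_filter.1 heA).2.2
  exact disjoint_left.1 h hvA ((mem_filter.1 heB).2.1 v hv)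

end

theorem density_delete_lemma [Fintype V] [DecidableEq V] (G : SimpleGraph V) [DecidableRel G.Adj]
    (X Y Z : Finset V) (hXY : X ⊆ Y) (hZ : Z ⊆ Y \ X)
    (hZne : Z.Nonempty) (hZne' : Z ≠ Y \ X)
    (h : outDensity G Z (Y \ Z) < outDensity G Y X) :
    outDensity G Y X < outDensity G (Y \ Z) X := by
  set W := (Y \ X) \ Z
  have hYX : Y \ X = Z ∪ W := (union_sdiff_of_subset hZ).symm
  have hYZ : Y \ Z = W ∪ X := by
    ext v
    have hvX := @hXY v
    have hvZ := @hZ v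
    simp only [W, mem_sdiff, mem_union] at hvX hvZ ⊢
    tauto
  have hZW : Disjoint Z (W ∪ X) := hYZ ▸ disjoint_sdiff
  have hWne : W.Nonempty := sdiff_nonempty.2 fun h' => hZne' (hZ.antisymm h')
  have hdZ : outDensity G Z (Y \ Z) = #(margEdges G Z (W ∪ X)) / #Z := by
    rw [outDensity, sdiff_eq_self_of_disjoint (hYZ ▸ hZW), hYZ]
  have hdY : outDensity G Y X
      = (#(margEdges G Z (W ∪ X)) + #(margEdges G W X)) / (#Z + #W) := by
    rw [outDensity, hYX, card_margEdges_union_left G hZW, card_union_of_disjoint disjoint_sdiff,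
      Nat.cast_add, Nat.cast_add]
  have hdYZ : outDensity G (Y \ Z) X = #(margEdges G W X) / #W := by
    rw [outDensity, sdiff_right_comm]
  rw [hdZ, hdY] at h
  rw [hdY, hdYZ]
  exact mediant_lt_right_of_left_lt_mediant (by exact_mod_cast hZne.card_pos)
    (by exact_mod_cast hWne.card_pos) h
end

section
/- The first nontrivial locally-dense subgraph B_1 in the locally-dense decomposition of a graph G is a densest subgraph of G, i.e., B_1 maximizes |E(X)|/|X| over all nonempty X ⊆ V. -/
open Finset

variable {V : Type*}

/-!
Among all vertex sets take one, `D`, of maximum density and, among those, of maximum size.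
Splitting `D` as `(D \ X) ∪ X` shows that every `X ⊆ D` has outer density at least `d(D)`,
while adding a disjoint `Y` shows that `Y` has outer density below `d(D)`, since otherwise
`D ∪ Y` would be a larger densest set. So `D` is locally dense and nonempty, hence
`B₁ ⊆ D`. Finally, a nonempty locally dense `W` is strictly denser than every proper superset
`W ∪ Y`: the outer density of `Y` over `W` is below `d(W) = d(W, ∅)`. Hence `B₁ = D`.
-/

section

variable [Fintype V] [DecidableEq V] (G : SimpleGraph V) [DecidableRel G.Adj]

def density (X : Finset V) : ℚ := (#(innerEdges G X) : ℚ) / #X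

lemma innerEdges_empty : innerEdges G ∅ = ∅ := by
  ext e
  induction e using Sym2.ind with
  | _ a b => simp [innerEdges, forall_and]

lemma margEdges_empty_left (A : Finset V) : margEdges G ∅ A = ∅ := by
  ext e
  simp [margEdges]

lemma margEdges_empty_right (A : Finset V) : margEdges G A ∅ = innerEdges G A := by
  ext e
  induction e using Sym2.ind with
  | _ a b =>
    simp only [margEdges, innerEdges, mem_filter, Sym2.mem_iff, union_empty, or_imp, forall_and,
      forall_eq, or_and_right, exists_or, exists_eq_left]
    tauto

lemma card_innerEdges_union {A C : Finset V} (h : Disjoint A C) :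
    #(innerEdges G (A ∪ C)) = #(innerEdges G A) + #(margEdges G C A) := by
  have hunion : innerEdges G (A ∪ C) = innerEdges G A ∪ margEdges G C A := by
    ext e
    induction e using Sym2.ind with
    | _ a b =>
      simp only [innerEdges, margEdges, mem_filter, mem_union, Sym2.mem_iff, or_imp, forall_and,
        forall_eq, or_and_right, exists_or, exists_eq_left]
      tauto
  have hdisj : Disjoint (innerEdges G A) (margEdges G C A) := by
    refine disjoint_left.mpr fun e hA hC => ?_
    obtain ⟨v, hv, hvC⟩ := (mem_filter.mp hC).2.2
    exact disjoint_left.mp h ((mem_filter.mp hA).2 v hv) hvC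
  rw [hunion, card_union_of_disjoint hdisj]

lemma density_nonneg (X : Finset V) : 0 ≤ density G X := by
  unfold density
  positivity

lemma density_mul_card (X : Finset V) : density G X * #X = #(innerEdges G X) :=
  div_mul_cancel_of_imp fun h => by
    rw [card_eq_zero.mp (Nat.cast_eq_zero.mp h), innerEdges_empty, card_empty, Nat.cast_zero]

lemma outDensity_mul_card {C A : Finset V} (h : Disjoint C A) :
    outDensity G C A * #C = #(margEdges G C A) := by
  rw [outDensity, sdiff_eq_self_of_disjoint h]
  exact div_mul_cancel_of_imp fun hC => by
    rw [card_eq_zero.mp (Nat.cast_eq_zero.mp hC), margEdges_empty_left, card_empty, Nat.cast_zero]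

lemma outDensity_sdiff_self (W : Finset V) : outDensity G W (W \ W) = density G W := by
  rw [outDensity, sdiff_self, bot_eq_empty, sdiff_empty, margEdges_empty_right, density]

/-- The density of `A ∪ C` is the weighted mean of `d(A)` and of the outer density `d(C, A)`. -/
lemma density_union_sub_mul_card {A C : Finset V} (h : Disjoint A C) (t : ℚ) :
    (density G (A ∪ C) - t) * #(A ∪ C)
      = (density G A - t) * #A + (outDensity G C A - t) * #C := by
  have hE : (#(innerEdges G (A ∪ C)) : ℚ) = #(innerEdges G A) + #(margEdges G C A) := by
    exact_mod_cast card_innerEdges_union G h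
  rw [← density_mul_card, ← density_mul_card, ← outDensity_mul_card G h.symm] at hE
  have hV : (#(A ∪ C) : ℚ) = #A + #C := by exact_mod_cast card_union_of_disjoint h
  rw [hV] at hE ⊢
  linear_combination hE

structure IsMaxDensest (D : Finset V) : Prop where
  density_le : ∀ X, density G X ≤ density G D
  card_le : ∀ X, density G X = density G D → #X ≤ #D

lemma exists_isMaxDensest : ∃ D, IsMaxDensest G D := by
  obtain ⟨D₀, -, hD₀⟩ := (univ : Finset (Finset V)).exists_max_image (density G) univ_nonempty
  obtain ⟨D, hD, hmax⟩ := (univ.filter fun X => density G X = density G D₀).exists_max_image card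
    ⟨D₀, mem_filter.mpr ⟨mem_univ _, rfl⟩⟩
  have hD : density G D = density G D₀ := (mem_filter.mp hD).2
  refine ⟨D, fun X => hD ▸ hD₀ X (mem_univ _), fun X hX => hmax X ?_⟩
  exact mem_filter.mpr ⟨mem_univ _, hX.trans hD⟩

namespace IsMaxDensest

variable {G} {D : Finset V} (hD : IsMaxDensest G D)
include hD

lemma nonempty {X : Finset V} (hX : X.Nonempty) : D.Nonempty := by
  rw [nonempty_iff_ne_empty]
  rintro rfl
  have h0 : density G X = density G ∅ :=
    le_antisymm (hD.density_le X) (by simpa [density] using density_nonneg G X)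
  exact hX.card_pos.ne' (Nat.le_zero.mp (hD.card_le X h0))

lemma density_le_outDensity {X : Finset V} (hX : X.Nonempty) (hXD : X ⊆ D) :
    density G D ≤ outDensity G X (D \ X) := by
  have h := density_union_sub_mul_card G (sdiff_disjoint : Disjoint (D \ X) X) (density G D)
  rw [sdiff_union_of_subset hXD, sub_self, zero_mul] at h
  have hrest : (density G (D \ X) - density G D) * #(D \ X) ≤ 0 :=
    mul_nonpos_of_nonpos_of_nonneg (sub_nonpos.mpr (hD.density_le _)) (Nat.cast_nonneg _)
  have hpos : (0 : ℚ) < #X := by exact_mod_cast hX.card_pos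
  have hX' : 0 ≤ (outDensity G X (D \ X) - density G D) * #X := by linarith
  linarith [nonneg_of_mul_nonneg_left hX' hpos]

lemma outDensity_lt_density {Y : Finset V} (hY : Y.Nonempty) (hYD : Disjoint D Y) :
    outDensity G Y D < density G D := by
  by_contra! hle
  have h := density_union_sub_mul_card G hYD (density G D)
  rw [sub_self, zero_mul, zero_add] at h
  have hge : density G D ≤ density G (D ∪ Y) := by
    refine sub_nonneg.mp (nonneg_of_mul_nonneg_left ?_ (b := (#(D ∪ Y) : ℚ)) ?_)
    · rw [h]
      exact mul_nonneg (sub_nonneg.mpr hle) (Nat.cast_nonneg _)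
    · exact_mod_cast (hY.mono subset_union_right).card_pos
  have hcard := hD.card_le _ (le_antisymm (hD.density_le _) hge)
  rw [card_union_of_disjoint hYD] at hcard
  exact hY.card_pos.ne' (by omega)

lemma locallyDense : LocallyDense G D := by
  rintro ⟨X, Y, hX, hY, hXD, hYD, hle⟩
  have hYD : Disjoint D Y := disjoint_iff_inter_eq_empty.mpr (by rw [inter_comm, hYD])
  exact ((hD.density_le_outDensity hX hXD).trans hle).not_gt (hD.outDensity_lt_density hY hYD)

end IsMaxDensest

lemma LocallyDense.density_lt_of_ssubset {W X : Finset V} (hW : LocallyDense G W)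
    (hWne : W.Nonempty) (hWX : W ⊂ X) : density G X < density G W := by
  have hY : (X \ W).Nonempty := sdiff_nonempty.mpr (not_subset_of_ssubset hWX)
  have hlt : outDensity G (X \ W) W < density G W := by
    rw [← outDensity_sdiff_self]
    exact lt_of_not_ge fun hle =>
      hW ⟨W, X \ W, hWne, hY, subset_rfl, sdiff_inter_self _ _, hle⟩
  have h := density_union_sub_mul_card G (disjoint_sdiff (s := W) (t := X)) (density G W)
  rw [union_sdiff_of_subset hWX.subset, sub_self, zero_mul, zero_add] at h
  have hneg : (density G X - density G W) * #X < 0 := by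
    rw [h]
    exact mul_neg_of_neg_of_pos (sub_neg.mpr hlt) (by exact_mod_cast hY.card_pos)
  exact sub_neg.mp (neg_of_mul_neg_left hneg (Nat.cast_nonneg _))

lemma locallyDense_empty : LocallyDense G ∅ := by
  rintro ⟨X, -, hX, -, hX0, -⟩
  exact hX.ne_empty (subset_empty.mp hX0)

variable {G} in
lemma subset_of_locallyDense {k : ℕ} {B : ℕ → Finset V}
    (hchain : ∀ i j, i < j → j ≤ k → B i ⊂ B j)
    (hall : ∀ W : Finset V, LocallyDense G W ↔ ∃ i ≤ k, W = B i)
    {W : Finset V} (hW : LocallyDense G W) (hne : W.Nonempty) : B 1 ⊆ W := by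
  have hmono : ∀ i j, i ≤ j → j ≤ k → B i ⊆ B j := fun i j hij hjk =>
    hij.eq_or_lt.elim (fun h => h ▸ subset_rfl) fun h => (hchain i j h hjk).subset
  obtain ⟨i, hik, rfl⟩ := (hall W).mp hW
  obtain ⟨j, hjk, hj⟩ := (hall ∅).mp (locallyDense_empty G)
  rcases i with _ | i
  · exact absurd (subset_empty.mp (hj ▸ hmono 0 j j.zero_le hjk)) hne.ne_empty
  · exact hmono 1 (i + 1) (by omega) hik

end

theorem first_locallyDense_is_densest [Fintype V] [DecidableEq V] (G : SimpleGraph V) [DecidableRel G.Adj]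
    (k : ℕ) (B : ℕ → Finset V)
    (hchain : ∀ i j, i < j → j ≤ k → B i ⊂ B j)
    (hall : ∀ W : Finset V, LocallyDense G W ↔ ∃ i ≤ k, W = B i)
    (hk : 1 ≤ k) :
    ∀ X : Finset V, X.Nonempty →
      ((innerEdges G X).card : ℚ) / (X.card : ℚ)
        ≤ ((innerEdges G (B 1)).card : ℚ) / ((B 1).card : ℚ) := by
  obtain ⟨D, hD⟩ := exists_isMaxDensest G
  have hB1 : LocallyDense G (B 1) := (hall _).mpr ⟨1, hk, rfl⟩
  have hB1ne : (B 1).Nonempty :=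
    nonempty_iff_ne_empty.mpr fun h => (hchain 0 1 one_pos hk).not_subset (h ▸ empty_subset _)
  have hDne : D.Nonempty := hD.nonempty hB1ne
  have hB1D : B 1 = D := by
    refine (subset_of_locallyDense hchain hall hD.locallyDense hDne).eq_or_ssubset.resolve_right ?_
    exact fun hss => (hB1.density_lt_of_ssubset G hB1ne hss).not_ge (hD.density_le _)
  intro X _
  exact hB1D ▸ hD.density_le X
end

section
/- Let ∅ = B_0 ⊊ ⋯ ⊊ B_k = V be the chain of locally-dense subgraphs of G. For every 0 ≤ i ≤ k and every real α with d(B_{i+1}, B_i) < α ≤ d(B_i, B_{i-1}) (interpreting the bounds as +∞ for i = 0 side and −∞ beyond k appropriately), the largest maximizer of W ↦ |E(W)| − α|W| over W ⊆ V is exactly B_i. -/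
/-!
Subtracting `α` per vertex keeps `W ↦ |E(W)|` supermodular, so the maximizers of
`W ↦ |E(W)| - α|W|` are closed under union and there is a greatest one, `M`. Removing a nonempty
`X ⊆ M` loses at least `α|X|` edges while adding a nonempty `Y` outside `M` gains fewer than
`α|Y|`, so `M` is locally dense, i.e. `M = B_l`. Local density of `B_{i-1}` (for `l < i`) or of
`B_{i+1}` (for `l > i`) then compares `B_l` with `B_i`: in the first case `B_i` is another,
larger maximizer, in the second `B_l` scores strictly less than `B_i`.
-/

open Finset

variable {V : Type*}

section Supermodular

variable {α β : Type*} [Lattice α] [AddCommGroup β] [LinearOrder β] [IsOrderedAddMonoid β]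

def IsSupermodular (f : α → β) : Prop :=
  ∀ a b, f a + f b ≤ f (a ⊔ b) + f (a ⊓ b)

theorem IsSupermodular.le_sup_of_maximizes {f : α → β} (hf : IsSupermodular f) {a b : α}
    (ha : ∀ x, f x ≤ f a) (hb : ∀ x, f x ≤ f b) (x : α) : f x ≤ f (a ⊔ b) := by
  have hab : f a + f b ≤ f (a ⊔ b) + f b := (hf a b).trans (add_le_add_right (hb _) _)
  exact (ha x).trans (le_of_add_le_add_right hab)

theorem IsSupermodular.exists_greatest_maximizer [Finite α] [Nonempty α] {f : α → β}
    (hf : IsSupermodular f) : ∃ m, (∀ x, f x ≤ f m) ∧ ∀ x, f x = f m → x ≤ m := by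
  have := Fintype.ofFinite α
  obtain ⟨m₀, hm₀⟩ := Finite.exists_max f
  let S := univ.filter fun x => ∀ y, f y ≤ f x
  have hS : S.Nonempty := ⟨m₀, mem_filter.2 ⟨mem_univ _, hm₀⟩⟩
  have hmax : ∀ y, f y ≤ f (S.sup' hS id) :=
    sup'_induction (p := fun m => ∀ y, f y ≤ f m) hS id
      (fun _ ha _ hb => hf.le_sup_of_maximizes ha hb) fun _ hx => (mem_filter.1 hx).2
  refine ⟨S.sup' hS id, hmax, fun x hx => le_sup' id (mem_filter.2 ⟨mem_univ _, ?_⟩)⟩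
  exact fun y => hx ▸ hmax y

end Supermodular

theorem cast_card_eq_add_card_sdiff [DecidableEq V] {U W W' : Finset V} (hUW : U ⊆ W)
    (hWW' : W ⊆ W') :
    (W'.card : ℚ) = U.card + (W \ U).card + (W' \ W).card := by
  rw [← card_sdiff_add_card_eq_card hWW', ← card_sdiff_add_card_eq_card hUW]
  push_cast
  ring

section Graph

variable [Fintype V] [DecidableEq V] (G : SimpleGraph V) [DecidableRel G.Adj]

def edgeSurplus (α : ℚ) (W : Finset V) : ℚ :=
  (innerEdges G W).card - α * W.card

theorem innerEdges_mono : Monotone (innerEdges G) := fun _ _ h _ he => by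
  simp only [innerEdges, mem_filter] at he ⊢
  exact ⟨he.1, fun v hv => h (he.2 v hv)⟩

theorem isSupermodular_edgeSurplus (α : ℚ) : IsSupermodular (edgeSurplus G α) := by
  intro S T
  have hunion : innerEdges G S ∪ innerEdges G T ⊆ innerEdges G (S ∪ T) :=
    union_subset (innerEdges_mono G subset_union_left) (innerEdges_mono G subset_union_right)
  have hinter : innerEdges G S ∩ innerEdges G T ⊆ innerEdges G (S ∩ T) := by
    intro e he
    simp only [innerEdges, mem_inter, mem_filter] at he ⊢
    exact ⟨he.1.1, fun v hv => ⟨he.1.2 v hv, he.2.2 v hv⟩⟩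
  have hedges : ((innerEdges G S).card : ℚ) + (innerEdges G T).card
      ≤ (innerEdges G (S ⊔ T)).card + (innerEdges G (S ⊓ T)).card := by
    rw [← Nat.cast_add, ← Nat.cast_add, ← card_union_add_card_inter]
    exact_mod_cast add_le_add (card_le_card hunion) (card_le_card hinter)
  have hverts : (S.card : ℚ) + T.card = (S ⊔ T).card + (S ⊓ T).card := by
    exact_mod_cast (card_union_add_card_inter S T).symm
  simp only [edgeSurplus]
  linear_combination hedges - α * hverts

theorem card_margEdges_sdiff_add_card_innerEdges (X Y : Finset V) :
    (margEdges G (X \ Y) Y).card + (innerEdges G Y).card = (innerEdges G (X ∪ Y)).card := by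
  rw [← card_filter_add_card_filter_not (s := innerEdges G (X ∪ Y))
    (fun e => ∃ v ∈ e, v ∈ X \ Y)]
  congr 2 <;> ext e <;> simp only [innerEdges, margEdges, mem_filter, sdiff_union_self_eq_union]
  · tauto
  · constructor
    · rintro ⟨hG, hY⟩
      refine ⟨⟨hG, fun v hv => mem_union_right _ (hY v hv)⟩, ?_⟩
      rintro ⟨v, hv, hvX⟩
      exact (mem_sdiff.1 hvX).2 (hY v hv)
    · rintro ⟨⟨hG, hXY⟩, hnot⟩
      refine ⟨hG, fun v hv => ?_⟩
      by_contra hvY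
      exact hnot ⟨v, hv, mem_sdiff.2 ⟨(mem_union.1 (hXY v hv)).resolve_right hvY, hvY⟩⟩

theorem outDensity_eq (X Y : Finset V) :
    outDensity G X Y
      = (((innerEdges G (X ∪ Y)).card : ℚ) - (innerEdges G Y).card) / (X \ Y).card := by
  rw [outDensity, ← card_margEdges_sdiff_add_card_innerEdges]
  push_cast
  ring

theorem outDensity_of_disjoint {Y M : Finset V} (h : Disjoint Y M) :
    outDensity G Y M
      = (((innerEdges G (Y ∪ M)).card : ℚ) - (innerEdges G M).card) / Y.card := by
  rw [outDensity_eq, sdiff_eq_self_of_disjoint h]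

theorem outDensity_sdiff_of_subset {X M : Finset V} (h : X ⊆ M) :
    outDensity G X (M \ X)
      = (((innerEdges G M).card : ℚ) - (innerEdges G (M \ X)).card) / X.card := by
  rw [outDensity_of_disjoint G disjoint_sdiff, union_sdiff_of_subset h]

theorem outDensity_of_subset {U W : Finset V} (h : U ⊆ W) :
    outDensity G W U
      = (((innerEdges G W).card : ℚ) - (innerEdges G U).card) / (W \ U).card := by
  rw [outDensity_eq, union_eq_left.2 h]

-- Cross-multiplied, so that it also holds when `W \ U` or `W' \ W` is empty.
theorem LocallyDense.gain_mul_le {U W W' : Finset V} (hW : LocallyDense G W) (hUW : U ⊆ W)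
    (hWW' : W ⊆ W') :
    (((innerEdges G W').card : ℚ) - (innerEdges G W).card) * (W \ U).card
      ≤ (((innerEdges G W).card : ℚ) - (innerEdges G U).card) * (W' \ W).card := by
  rcases (W \ U).eq_empty_or_nonempty with hX | hX
  · rw [(sdiff_eq_empty_iff_subset.1 hX).antisymm hUW]
    simp
  rcases (W' \ W).eq_empty_or_nonempty with hY | hY
  · rw [(sdiff_eq_empty_iff_subset.1 hY).antisymm hWW']
    simp
  by_contra! h
  refine hW ⟨W \ U, W' \ W, hX, hY, sdiff_subset, sdiff_inter_self _ _, ?_⟩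
  rw [outDensity_sdiff_of_subset G sdiff_subset, outDensity_of_disjoint G sdiff_disjoint,
    sdiff_sdiff_right_self, inf_eq_inter, inter_eq_right.2 hUW, sdiff_union_of_subset hWW',
    div_le_div_iff₀ (by exact_mod_cast hX.card_pos) (by exact_mod_cast hY.card_pos)]
  exact h.le

theorem LocallyDense.edgeSurplus_le {U W W' : Finset V} {α : ℚ} (hW : LocallyDense G W)
    (hUW : U ⊆ W) (hWW' : W ⊂ W') (hα : α ≤ outDensity G W' W) :
    edgeSurplus G α U ≤ edgeSurplus G α W' := by
  have hgain := hW.gain_mul_le G hUW hWW'.subset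
  have hy : (0 : ℚ) < (W' \ W).card := by
    exact_mod_cast (sdiff_nonempty.2 hWW'.not_subset).card_pos
  rw [outDensity_of_subset G hWW'.subset, le_div_iff₀ hy] at hα
  rw [edgeSurplus, edgeSurplus, cast_card_eq_add_card_sdiff hUW hWW'.subset]
  nlinarith

theorem LocallyDense.edgeSurplus_lt {U W W' : Finset V} {α : ℚ} (hW : LocallyDense G W)
    (hUW : U ⊂ W) (hWW' : W ⊆ W') (hα : outDensity G W U < α) :
    edgeSurplus G α W' < edgeSurplus G α U := by
  have hgain := hW.gain_mul_le G hUW.subset hWW'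
  have hx : (0 : ℚ) < (W \ U).card := by
    exact_mod_cast (sdiff_nonempty.2 hUW.not_subset).card_pos
  rw [outDensity_of_subset G hUW.subset, div_lt_iff₀ hx] at hα
  rw [edgeSurplus, edgeSurplus, cast_card_eq_add_card_sdiff hUW.subset hWW']
  nlinarith

theorem locallyDense_of_greatest_maximizer {α : ℚ} {M : Finset V}
    (hmax : ∀ W, edgeSurplus G α W ≤ edgeSurplus G α M)
    (hgreatest : ∀ W, edgeSurplus G α W = edgeSurplus G α M → W ⊆ M) :
    LocallyDense G M := by
  rintro ⟨X, Y, hX, hY, hXM, hYM, hle⟩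
  have hYM : Disjoint Y M := disjoint_iff_inter_eq_empty.2 hYM
  have hx : (0 : ℚ) < X.card := by exact_mod_cast hX.card_pos
  have hy : (0 : ℚ) < Y.card := by exact_mod_cast hY.card_pos
  have hin : α ≤ outDensity G X (M \ X) := by
    have hcard : ((M \ X).card : ℚ) + X.card = M.card := by
      exact_mod_cast card_sdiff_add_card_eq_card hXM
    have := hmax (M \ X)
    rw [outDensity_sdiff_of_subset G hXM, le_div_iff₀ hx]
    rw [edgeSurplus, edgeSurplus] at this
    linear_combination this + α * hcard
  have hout : outDensity G Y M < α := by
    have hcard : ((Y ∪ M).card : ℚ) = Y.card + M.card := by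
      exact_mod_cast card_union_of_disjoint hYM
    have hne : edgeSurplus G α (Y ∪ M) ≠ edgeSurplus G α M := fun h => by
      obtain ⟨y, hyY⟩ := hY
      exact disjoint_left.1 hYM hyY (hgreatest _ h (mem_union_left _ hyY))
    have := lt_of_le_of_ne (hmax (Y ∪ M)) hne
    rw [outDensity_of_disjoint G hYM, div_lt_iff₀ hy]
    rw [edgeSurplus, edgeSurplus] at this
    linear_combination this + α * hcard
  exact lt_irrefl _ (hout.trans_le (hin.trans hle))

end Graph

theorem subset_of_chain {k : ℕ} {B : ℕ → Finset V}
    (hchain : ∀ i j, i < j → j ≤ k → B i ⊂ B j)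
    {i j : ℕ} (hij : i ≤ j) (hjk : j ≤ k) : B i ⊆ B j := by
  rcases hij.lt_or_eq with hij | rfl
  · exact (hchain i j hij hjk).subset
  · exact subset_rfl

theorem maximizer_eq_chain_element_general [Fintype V] [DecidableEq V] (G : SimpleGraph V) [DecidableRel G.Adj]
    (k : ℕ) (B : ℕ → Finset V)
    (hchain : ∀ i j, i < j → j ≤ k → B i ⊂ B j)
    (hall : ∀ W : Finset V, LocallyDense G W ↔ ∃ i ≤ k, W = B i)
    (i : ℕ) (hik : i ≤ k) (α : ℚ)
    (hαup : i < k → outDensity G (B (i + 1)) (B i) < α)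
    (hαlo : 1 ≤ i → α ≤ outDensity G (B i) (B (i - 1))) :
    (∀ W : Finset V,
      ((innerEdges G W).card : ℚ) - α * W.card
        ≤ ((innerEdges G (B i)).card : ℚ) - α * (B i).card) ∧
    (∀ W : Finset V,
      ((innerEdges G W).card : ℚ) - α * W.card
        = ((innerEdges G (B i)).card : ℚ) - α * (B i).card → W ⊆ B i) := by
  obtain ⟨M, hmax, hgreatest⟩ := (isSupermodular_edgeSurplus G α).exists_greatest_maximizer
  obtain ⟨l, hlk, rfl⟩ := (hall M).1 (locallyDense_of_greatest_maximizer G hmax hgreatest)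
  obtain rfl : l = i := by
    rcases lt_trichotomy l i with hli | rfl | hil
    · have hle := LocallyDense.edgeSurplus_le G ((hall _).2 ⟨i - 1, by omega, rfl⟩)
        (subset_of_chain hchain (by omega : l ≤ i - 1) (by omega))
        (hchain (i - 1) i (by omega) hik) (hαlo (by omega))
      have hsub := hgreatest (B i) ((hmax _).antisymm hle)
      exact absurd hsub (hchain l i hli hik).not_subset
    · rfl
    · have hlt := LocallyDense.edgeSurplus_lt G ((hall _).2 ⟨i + 1, by omega, rfl⟩)
        (hchain i (i + 1) (by omega) (by omega)) (subset_of_chain hchain hil hlk)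
        (hαup (by omega))
      exact absurd (hmax (B i)) (not_le.2 hlt)
  exact ⟨hmax, hgreatest⟩

theorem maximizer_eq_chain_element [Fintype V] [DecidableEq V] (G : SimpleGraph V) [DecidableRel G.Adj]
    (k : ℕ) (B : ℕ → Finset V)
    (hchain : ∀ i j, i < j → j ≤ k → B i ⊂ B j)
    (hall : ∀ W : Finset V, LocallyDense G W ↔ ∃ i ≤ k, W = B i)
    (hB0 : B 0 = ∅) (hBk : B k = Finset.univ)
    (i : ℕ) (hik : i ≤ k) (α : ℚ)
    (hαup : i < k → outDensity G (B (i + 1)) (B i) < α)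
    (hαlo : 1 ≤ i → α ≤ outDensity G (B i) (B (i - 1))) :
    (∀ W : Finset V,
      ((innerEdges G W).card : ℚ) - α * W.card
        ≤ ((innerEdges G (B i)).card : ℚ) - α * (B i).card) ∧
    (∀ W : Finset V,
      ((innerEdges G W).card : ℚ) - α * W.card
        = ((innerEdges G (B i)).card : ℚ) - α * (B i).card → W ⊆ B i) :=
  maximizer_eq_chain_element_general G k B hchain hall i hik α hαup hαlo
end

section
/- Goldberg-style min-cut reduction correctness: let G = (V,E), X ⊆ V, α ≥ 0. Construct a weighted graph H on vertex set (V\X) ∪ {s,t} with unit-weight edges E(V\X), edges (y,t) of weight 2α for each y ∈ V\X, and edges (s,y) of weight deg(y; V\X) + 2·deg(y; X). Then for any Z ⊆ V\X, the capacity of the s–t cut ({s} ∪ Z, rest) equals 2|E| − 2α|X| − 2(|E(X ∪ Z)| − α|X ∪ Z|). Consequently, a minimum s–t cut {s} ∪ Z* yields X ∪ Z* as a maximizer of |E(W)| − α|W| over all W with X ⊆ W ⊆ V. -/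
open Finset

variable {V : Type*}

/-- Number of edges between disjoint sets `A` and `B` (counted as ordered pairs in `A × B`). -/
def crossCard [DecidableEq V] (G : SimpleGraph V) [DecidableRel G.Adj] (A B : Finset V) : ℕ :=
  ((A ×ˢ B).filter (fun p => G.Adj p.1 p.2)).card

/-- Capacity of the s-t cut `({s} ∪ Z, rest)` in the Goldberg-style graph `H`. -/
def cutCap [Fintype V] [DecidableEq V] (G : SimpleGraph V) [DecidableRel G.Adj]
    (X : Finset V) (α : ℚ) (Z : Finset V) : ℚ :=
  2 * (Z.card : ℚ) * α
    + ∑ y ∈ (Finset.univ \ X) \ Z,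
        ((degIn G y (Finset.univ \ X) : ℚ) + 2 * (degIn G y X : ℚ))
    + (crossCard G Z ((Finset.univ \ X) \ Z) : ℚ)

/-
Write `S = X ∪ Z` and `R = V \ S`. The source edge of `y ∈ R` has weight
`deg(y; Z) + deg(y; R) + 2 deg(y; X)`, so together with the unit edges from `Z` to `R` the cut
counts every edge between `S` and `R` twice and, by the handshake lemma inside `R`, every edge of
`E(R)` twice: this is `2 (|E| - |E(S)|)`, and the sink edges add `2α|Z|`. Hence minimizing the
cut over `Z` maximizes `|E(X ∪ Z)| - α|X ∪ Z|`, and every `W ⊇ X` is `X ∪ (W \ X)`.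
-/

section CrossCard

variable [DecidableEq V] (G : SimpleGraph V) [DecidableRel G.Adj]

lemma sum_degIn (A B : Finset V) : ∑ y ∈ A, degIn G y B = crossCard G A B := by
  simp only [degIn, crossCard, card_filter, sum_product]

lemma crossCard_comm (A B : Finset V) : crossCard G A B = crossCard G B A :=
  have := G.symm
  Rel.card_interedges_comm A B

lemma crossCard_union_right (A : Finset V) {B C : Finset V} (h : Disjoint B C) :
    crossCard G A (B ∪ C) = crossCard G A B + crossCard G A C := by
  simp only [crossCard, product_union, filter_union]
  exact card_union_of_disjoint (disjoint_filter_filter (disjoint_product.2 (Or.inr h)))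

lemma crossCard_union_left {A B : Finset V} (h : Disjoint A B) (C : Finset V) :
    crossCard G (A ∪ B) C = crossCard G A C + crossCard G B C := by
  rw [crossCard_comm, crossCard_union_right G C h, crossCard_comm G C, crossCard_comm G C]

/- Each edge inside `R` is the edge of exactly two darts. -/
lemma crossCard_self [Fintype V] (R : Finset V) : crossCard G R R = 2 * #(innerEdges G R) := by
  have hdarts : crossCard G R R = #{d : G.Dart | d.edge ∈ innerEdges G R} := by
    refine card_bij' (fun p hp => ⟨p, (mem_filter.1 hp).2⟩) (fun d _ => d.toProd)
      ?_ ?_ (fun _ _ => rfl) (fun _ _ => rfl)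
    · simp +contextual [innerEdges]
    · simp only [innerEdges, mem_filter, mem_univ, true_and, SimpleGraph.mem_edgeFinset,
        SimpleGraph.Dart.edge_mem, mem_product]
      exact fun d hd => ⟨⟨hd _ (Sym2.mem_mk_left _ _), hd _ (Sym2.mem_mk_right _ _)⟩, d.adj⟩
  rw [hdarts, card_eq_sum_card_fiberwise (f := SimpleGraph.Dart.edge) (t := innerEdges G R)
    (fun d hd => by simpa using hd), mul_comm, ← smul_eq_mul, ← sum_const]
  refine sum_congr rfl fun e he => ?_
  rw [filter_filter, ← G.dart_edge_fiber_card e (by simpa [innerEdges] using (mem_filter.1 he).1)]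
  congr 1
  ext d
  simp only [mem_filter, mem_univ, true_and, and_iff_right_iff_imp]
  rintro rfl
  exact he

end CrossCard

section Cut

variable [Fintype V] [DecidableEq V] (G : SimpleGraph V) [DecidableRel G.Adj]

lemma innerEdges_univ : innerEdges G univ = G.edgeFinset :=
  filter_true_of_mem fun _ _ _ _ => mem_univ _

lemma card_edgeFinset_eq (S : Finset V) :
    #G.edgeFinset = #(innerEdges G S) + crossCard G S (univ \ S) + #(innerEdges G (univ \ S)) := by
  have hS : Disjoint S (univ \ S) := disjoint_sdiff
  have h := crossCard_self G (S ∪ (univ \ S))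
  rw [union_sdiff_of_subset (subset_univ S), innerEdges_univ] at h
  rw [← union_sdiff_of_subset (subset_univ S), crossCard_union_left G hS,
    crossCard_union_right G _ hS, crossCard_union_right G _ hS, crossCard_self, crossCard_self,
    crossCard_comm G (univ \ S)] at h
  omega

lemma two_mul_card_edgeFinset_eq_cut {X Z : Finset V} (hZ : Z ⊆ univ \ X) :
    2 * #G.edgeFinset = ∑ y ∈ (univ \ X) \ Z, (degIn G y (univ \ X) + 2 * degIn G y X)
      + crossCard G Z ((univ \ X) \ Z) + 2 * #(innerEdges G (X ∪ Z)) := by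
  have hXZ : Disjoint X Z := disjoint_sdiff.mono_right hZ
  have hR : (univ \ X) \ Z = univ \ (X ∪ Z) := sdiff_sdiff_left
  have hUX : univ \ X = Z ∪ ((univ \ X) \ Z) := (union_sdiff_of_subset hZ).symm
  set R := (univ \ X) \ Z
  have hZR : Disjoint Z R := disjoint_sdiff
  rw [sum_add_distrib, ← mul_sum, sum_degIn, sum_degIn, hUX, crossCard_union_right G _ hZR,
    crossCard_self, card_edgeFinset_eq G (X ∪ Z), ← hR, crossCard_union_left G hXZ,
    crossCard_comm G X, crossCard_comm G Z]
  ring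

lemma cutCap_eq (X : Finset V) (α : ℚ) {Z : Finset V} (hZ : Z ⊆ univ \ X) :
    cutCap G X α Z
      = 2 * (#G.edgeFinset : ℚ) - 2 * α * (#X : ℚ)
        - 2 * ((#(innerEdges G (X ∪ Z)) : ℚ) - α * (#(X ∪ Z) : ℚ)) := by
  have h : (2 * #G.edgeFinset : ℚ) = ∑ y ∈ (univ \ X) \ Z,
      ((degIn G y (univ \ X) : ℚ) + 2 * degIn G y X)
      + crossCard G Z ((univ \ X) \ Z) + 2 * #(innerEdges G (X ∪ Z)) := by
    exact_mod_cast two_mul_card_edgeFinset_eq_cut G hZ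
  rw [cutCap, card_union_of_disjoint (disjoint_sdiff.mono_right hZ)]
  push_cast
  linarith

end Cut

theorem goldberg_cut_correct_general [Fintype V] [DecidableEq V] (G : SimpleGraph V) [DecidableRel G.Adj]
    (X : Finset V) (α : ℚ) :
    (∀ Z : Finset V, Z ⊆ Finset.univ \ X →
      cutCap G X α Z
        = 2 * (G.edgeFinset.card : ℚ) - 2 * α * (X.card : ℚ)
          - 2 * (((innerEdges G (X ∪ Z)).card : ℚ) - α * ((X ∪ Z).card : ℚ))) ∧
    (∀ Zs : Finset V, Zs ⊆ Finset.univ \ X →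
      (∀ Z : Finset V, Z ⊆ Finset.univ \ X → cutCap G X α Zs ≤ cutCap G X α Z) →
      ∀ W : Finset V, X ⊆ W →
        ((innerEdges G W).card : ℚ) - α * (W.card : ℚ)
          ≤ ((innerEdges G (X ∪ Zs)).card : ℚ) - α * ((X ∪ Zs).card : ℚ)) := by
  refine ⟨fun Z hZ => cutCap_eq G X α hZ, fun Zs hZs hmin W hXW => ?_⟩
  have hWX : W \ X ⊆ univ \ X := sdiff_subset_sdiff (subset_univ W) subset_rfl
  have h := hmin (W \ X) hWX
  rw [cutCap_eq G X α hZs, cutCap_eq G X α hWX, union_sdiff_of_subset hXW] at h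
  linarith

theorem goldberg_cut_correct [Fintype V] [DecidableEq V] (G : SimpleGraph V) [DecidableRel G.Adj]
    (X : Finset V) (α : ℚ) (hα : 0 ≤ α) :
    (∀ Z : Finset V, Z ⊆ Finset.univ \ X →
      cutCap G X α Z
        = 2 * (G.edgeFinset.card : ℚ) - 2 * α * (X.card : ℚ)
          - 2 * (((innerEdges G (X ∪ Z)).card : ℚ) - α * ((X ∪ Z).card : ℚ))) ∧
    (∀ Zs : Finset V, Zs ⊆ Finset.univ \ X →
      (∀ Z : Finset V, Z ⊆ Finset.univ \ X → cutCap G X α Zs ≤ cutCap G X α Z) →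
      ∀ W : Finset V, X ⊆ W →
        ((innerEdges G W).card : ℚ) - α * (W.card : ℚ)
          ≤ ((innerEdges G (X ∪ Zs)).card : ℚ) - α * ((X ∪ Zs).card : ℚ)) :=
  goldberg_cut_correct_general G X α
end

section
/- Let ∅ = B_0 ⊊ ⋯ ⊊ B_k = V be the locally-dense chain and let v be any vertex of B_i \ B_{i-1}. Then the number of neighbors of v inside B_i is at least d(B_i, B_{i-1}); equivalently, deg(v; B_i) ≥ |Ẽ(B_i\B_{i-1}, B_{i-1})| / |B_i\B_{i-1}|. -/
/-!
Suppose `d(B_i, B_{i-1}) > deg(v; B_i)` and pick `c` strictly in between. For `A ⊆ B` the excess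
`|E(A)| - c|A|` changes by `|B \ A| (d(B, A) - c)`. Among the sets of maximal excess, one of
largest size is locally dense: removing a part `X` cannot raise the excess, so `d(X, W \ X) ≥ c`,
while adding a disjoint `Y` must lower it, so `d(Y, W) < c`. Hence it is some `B_j`, and local
density makes the layer densities decrease along the chain. If `j < i`, the excess does not drop
from `B_j` to `B_{i-1}` and strictly grows from `B_{i-1}` to `B_i`; if `j ≥ i`, it does not grow
from `B_i` to `B_j` and strictly grows when `v` is removed from `B_i`. Either way `B_j` is not a
maximiser.
-/

open Finset

variable {V : Type*}

section

variable [Fintype V] [DecidableEq V] (G : SimpleGraph V) [DecidableRel G.Adj]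

theorem card_innerEdges_eq_add_card_margEdges {A B : Finset V} (h : A ⊆ B) :
    #(innerEdges G B) = #(innerEdges G A) + #(margEdges G (B \ A) A) := by
  rw [← card_filter_add_card_filter_not (s := innerEdges G B) (fun e => ∃ v ∈ e, v ∉ A),
    add_comm]
  congr 2 <;> ext e
  all_goals
    simp only [innerEdges, margEdges, mem_filter, sdiff_union_of_subset h, mem_sdiff]
    grind

theorem card_margEdges_singleton (v : V) (W : Finset V) :
    #(margEdges G {v} (W \ {v})) = degIn G v W := by
  have : margEdges G {v} (W \ {v}) = (W.filter (G.Adj v)).image (fun u => s(v, u)) := by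
    ext e
    induction e with
    | h p q =>
      simp only [margEdges, mem_filter, mem_image, SimpleGraph.mem_edgeFinset,
        SimpleGraph.mem_edgeSet, Sym2.mem_iff, mem_union, mem_singleton, mem_sdiff]
      grind [G.adj_symm, G.ne_of_adj]
  rw [this, card_image_of_injective _ fun _ _ => Sym2.congr_right.mp, degIn]

theorem card_sdiff_mul_outDensity (X Y : Finset V) :
    (#(X \ Y) : ℚ) * outDensity G X Y = #(margEdges G (X \ Y) Y) := by
  rcases (X \ Y).eq_empty_or_nonempty with h | h
  · simp [margEdges, h]
  · exact mul_div_cancel₀ _ (by exact_mod_cast h.card_pos.ne')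

theorem outDensity_sdiff_left (X Y : Finset V) :
    outDensity G (X \ Y) Y = outDensity G X Y := by
  rw [outDensity, outDensity, Finset.sdiff_idem]

theorem outDensity_sdiff_singleton {v : V} {W : Finset V} (hv : v ∈ W) :
    outDensity G W (W \ {v}) = degIn G v W := by
  rw [outDensity, Finset.sdiff_sdiff_eq_self (singleton_subset_iff.mpr hv),
    card_margEdges_singleton, card_singleton, Nat.cast_one, div_one]

theorem locallyDense_iff {W : Finset V} :
    LocallyDense G W ↔ ∀ A B, A ⊆ W → W ⊆ B → (W \ A).Nonempty → (B \ W).Nonempty →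
      outDensity G B W < outDensity G W A := by
  simp only [LocallyDense, not_exists, not_and, not_le]
  constructor
  · intro hW A B hAW hWB hA hB
    have := hW (W \ A) (B \ W) hA hB sdiff_subset (sdiff_inter_self _ _)
    rwa [Finset.sdiff_sdiff_eq_self hAW, outDensity_sdiff_left, outDensity_sdiff_left] at this
  · intro hW X Y hX hY hXW hYW
    have hYW : Disjoint W Y := disjoint_iff_inter_eq_empty.mpr (inter_comm W Y ▸ hYW)
    have := hW (W \ X) (W ∪ Y) sdiff_subset subset_union_left
      (by rwa [Finset.sdiff_sdiff_eq_self hXW]) (by rwa [union_sdiff_cancel_left hYW])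
    rwa [← outDensity_sdiff_left G W, Finset.sdiff_sdiff_eq_self hXW,
      ← outDensity_sdiff_left G (W ∪ Y), union_sdiff_cancel_left hYW] at this

def edgeExcess (c : ℚ) (A : Finset V) : ℚ :=
  #(innerEdges G A) - c * #A

variable {G}

theorem edgeExcess_sub_edgeExcess (c : ℚ) {A B : Finset V} (h : A ⊆ B) :
    edgeExcess G c B - edgeExcess G c A = #(B \ A) * (outDensity G B A - c) := by
  have hcard : #(B \ A) + #A = #B := card_sdiff_add_card_eq_card h
  have hedges := card_innerEdges_eq_add_card_margEdges G h
  rw [edgeExcess, edgeExcess, mul_sub, card_sdiff_mul_outDensity, ← hcard, hedges]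
  push_cast
  ring

theorem edgeExcess_le_edgeExcess_iff {c : ℚ} {A B : Finset V} (h : A ⊆ B)
    (hne : (B \ A).Nonempty) :
    edgeExcess G c A ≤ edgeExcess G c B ↔ c ≤ outDensity G B A := by
  rw [← sub_nonneg, edgeExcess_sub_edgeExcess c h,
    mul_nonneg_iff_of_pos_left (by exact_mod_cast hne.card_pos), sub_nonneg]

theorem edgeExcess_lt_edgeExcess_iff {c : ℚ} {A B : Finset V} (h : A ⊆ B)
    (hne : (B \ A).Nonempty) :
    edgeExcess G c A < edgeExcess G c B ↔ c < outDensity G B A := by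
  rw [← sub_pos, edgeExcess_sub_edgeExcess c h,
    mul_pos_iff_of_pos_left (by exact_mod_cast hne.card_pos), sub_pos]

theorem locallyDense_of_forall_edgeExcess_le {c : ℚ} {W : Finset V}
    (hmax : ∀ A, edgeExcess G c A ≤ edgeExcess G c W)
    (hcard : ∀ A, edgeExcess G c W ≤ edgeExcess G c A → #A ≤ #W) : LocallyDense G W := by
  refine (locallyDense_iff G).mpr fun A B hAW hWB hA hB => ?_
  have hinner : c ≤ outDensity G W A := (edgeExcess_le_edgeExcess_iff hAW hA).mp (hmax A)
  have houter : outDensity G B W < c := by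
    by_contra! hc
    have := hcard B ((edgeExcess_le_edgeExcess_iff hWB hB).mpr hc)
    exact (card_lt_card (hWB.ssubset_of_not_subset (sdiff_nonempty.mp hB))).not_ge this
  exact houter.trans_le hinner

theorem LocallyDense.edgeExcess_inner_le {c : ℚ} {A W B : Finset V} (hW : LocallyDense G W)
    (hAW : A ⊆ W) (hWB : W ⊆ B) (hB : (B \ W).Nonempty) (hc : c ≤ outDensity G B W) :
    edgeExcess G c A ≤ edgeExcess G c W := by
  rcases (W \ A).eq_empty_or_nonempty with hA | hA
  · rw [hAW.antisymm (sdiff_eq_empty_iff_subset.mp hA)]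
  · exact (edgeExcess_le_edgeExcess_iff hAW hA).mpr
      (hc.trans ((locallyDense_iff G).mp hW A B hAW hWB hA hB).le)

theorem LocallyDense.edgeExcess_outer_le {c : ℚ} {A W B : Finset V} (hW : LocallyDense G W)
    (hAW : A ⊆ W) (hWB : W ⊆ B) (hA : (W \ A).Nonempty) (hc : outDensity G W A ≤ c) :
    edgeExcess G c B ≤ edgeExcess G c W := by
  rcases (B \ W).eq_empty_or_nonempty with hB | hB
  · rw [(sdiff_eq_empty_iff_subset.mp hB).antisymm hWB]
  · exact not_lt.mp fun h => ((edgeExcess_lt_edgeExcess_iff hWB hB).mp h).not_ge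
      (((locallyDense_iff G).mp hW A B hAW hWB hA hB).le.trans hc)

variable (G) in
theorem exists_locallyDense_forall_edgeExcess_le (c : ℚ) :
    ∃ W, LocallyDense G W ∧ ∀ A, edgeExcess G c A ≤ edgeExcess G c W := by
  obtain ⟨W, -, hW⟩ := exists_max_image univ (fun A => toLex (edgeExcess G c A, #A))
    (univ_nonempty (α := Finset V))
  have hlex (A : Finset V) :
      edgeExcess G c A < edgeExcess G c W ∨ edgeExcess G c A = edgeExcess G c W ∧ #A ≤ #W :=
    Prod.Lex.le_iff.mp (hW A (mem_univ A))
  have hmax (A : Finset V) : edgeExcess G c A ≤ edgeExcess G c W := by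
    rcases hlex A with h | ⟨h, -⟩
    exacts [h.le, h.le]
  refine ⟨W, locallyDense_of_forall_edgeExcess_le hmax fun A hA => ?_, hmax⟩
  rcases hlex A with h | ⟨-, h⟩
  exacts [absurd hA h.not_ge, h]

end

theorem degree_ge_outer_density [Fintype V] [DecidableEq V] (G : SimpleGraph V) [DecidableRel G.Adj]
    (k : ℕ) (B : ℕ → Finset V)
    (hchain : ∀ i j, i < j → j ≤ k → B i ⊂ B j)
    (hall : ∀ W : Finset V, LocallyDense G W ↔ ∃ i ≤ k, W = B i)
    (i : ℕ) (hi1 : 1 ≤ i) (hik : i ≤ k)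
    (v : V) (hv : v ∈ B i \ B (i - 1)) :
    outDensity G (B i) (B (i - 1)) ≤ (degIn G v (B i) : ℚ) := by
  by_contra! hlt
  have hmono {a b : ℕ} (hab : a ≤ b) (hb : b ≤ k) : B a ⊆ B b :=
    hab.eq_or_lt.elim (fun h => h ▸ subset_rfl) fun h => (hchain a b h hb).subset
  have hvB : v ∈ B i := (mem_sdiff.mp hv).1
  obtain ⟨c, hdeg, hdens⟩ := exists_between hlt
  obtain ⟨W, hW, hmax⟩ := exists_locallyDense_forall_edgeExcess_le G c
  obtain ⟨j, hjk, rfl⟩ := (hall W).mp hW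
  rcases lt_or_ge j i with hji | hij
  · have hinner : edgeExcess G c (B j) ≤ edgeExcess G c (B (i - 1)) :=
      ((hall _).mpr ⟨i - 1, by omega, rfl⟩).edgeExcess_inner_le (hmono (by omega) (by omega))
        (hmono (by omega) hik) ⟨v, hv⟩ hdens.le
    have hstep : edgeExcess G c (B (i - 1)) < edgeExcess G c (B i) :=
      (edgeExcess_lt_edgeExcess_iff (hmono (by omega) hik) ⟨v, hv⟩).mpr hdens
    exact (hinner.trans_lt hstep).not_ge (hmax _)
  · have hv' : (B i \ (B i \ {v})).Nonempty := by
      rw [Finset.sdiff_sdiff_eq_self (singleton_subset_iff.mpr hvB)]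
      exact singleton_nonempty v
    have houter : edgeExcess G c (B j) ≤ edgeExcess G c (B i) :=
      ((hall _).mpr ⟨i, hik, rfl⟩).edgeExcess_outer_le sdiff_subset (hmono hij hjk) hv'
        (outDensity_sdiff_singleton G hvB ▸ hdeg.le)
    have hstep : edgeExcess G c (B i) < edgeExcess G c (B i \ {v}) := by
      rw [← not_le, edgeExcess_le_edgeExcess_iff sdiff_subset hv',
        outDensity_sdiff_singleton G hvB]
      exact not_le.mpr hdeg
    exact (houter.trans_lt hstep).not_ge (hmax _)
end
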